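/- arXiv:1510.05535 — 2 statements merged into one kernel-verified Lean document; each statement's English description precedes it below -/
import Mathlib

section
/- If A is an alternal mould, then A is mantar-invariant; that is, A(u_1,...,u_r) = (-1)^{r-1} A(u_r,...,u_1) for all r ≥ 1. -/
open List

variable {K : Type*} [Field K] [CharZero K]

/-- The multiset (as a list, with multiplicity) of shuffles of two words. -/
def shuffles {α : Type*} : List α → List α → List (List α)
  | [], v => [v]
  | u, [] => [u]
  | x :: u, y :: v =>
      ((shuffles u (y :: v)).map (x :: ·)) ++ ((shuffles (x :: u) v).map (y :: ·))
  termination_by u v => u.length + v.length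

/-- A mould (at the level of evaluations) is alternal if all its shuffle sums over
pairs of nonempty words vanish. -/
def Alternal (A : List K → K) : Prop :=
  ∀ u v : List K, u ≠ [] → v ≠ [] → ((shuffles u v).map A).sum = 0

/-- mould multiplication `mu`. -/
def mu (A B : List K → K) : List K → K :=
  fun w => ∑ k ∈ Finset.range (w.length + 1), A (w.take k) * B (w.drop k)

/-- `lu(A,B) = mu(A,B) - mu(B,A)`. -/
def lu (A B : List K → K) : List K → K :=
  fun w => mu A B w - mu B A w

/-- All decompositions of a word into two consecutive subwords. -/
def splits2 {α : Type*} (w : List α) : List (List α × List α) :=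
  (List.range (w.length + 1)).map fun k => (w.take k, w.drop k)

/-- All decompositions of a word into three consecutive subwords. -/
def splits3 {α : Type*} (w : List α) : List (List α × List α × List α) :=
  (splits2 w).flatMap fun p => (splits2 p.2).map fun q => (p.1, q.1, q.2)

/-- Add `s` to the first letter of a word. -/
def addFirst (s : K) : List K → List K
  | [] => []
  | x :: xs => (x + s) :: xs

/-- Add `s` to the last letter of a word. -/
def addLast (s : K) : List K → List K
  | [] => []
  | [x] => [x + s]
  | x :: xs => x :: addLast s xs

/-- `amit` for u-moulds: `(amit(B)·A)(w) = Σ_{w=abc, b,c≠∅} A(a⌈c) B(b)`. -/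
def amitU (B A : List K → K) : List K → K := fun w =>
  ((splits3 w).map fun p =>
    match p with
    | (_, [], _) => 0
    | (_, _, []) => 0
    | (a, b, c) => A (a ++ addFirst b.sum c) * B b).sum

/-- `anit` for u-moulds: `(anit(B)·A)(w) = Σ_{w=abc, a,b≠∅} A(a⌉c) B(b)`. -/
def anitU (B A : List K → K) : List K → K := fun w =>
  ((splits3 w).map fun p =>
    match p with
    | ([], _, _) => 0
    | (_, [], _) => 0
    | (a, b, c) => A (addLast b.sum a ++ c) * B b).sum

/-- `arit(B)·A = amit(B)·A - anit(B)·A` on u-moulds. -/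
def aritU (B A : List K → K) : List K → K :=
  fun w => amitU B A w - anitU B A w

/-- the ari bracket on u-moulds. -/
def ariU (A B : List K → K) : List K → K :=
  fun w => aritU B A w + lu A B w - aritU A B w

/-- `amit` for v-moulds. -/
def amitV (B A : List K → K) : List K → K := fun w =>
  ((splits3 w).map fun p =>
    match p with
    | (_, [], _) => 0
    | (_, _, []) => 0
    | (a, b, c0 :: c') => A (a ++ c0 :: c') * B (b.map (fun x => x - c0))).sum

/-- `anit` for v-moulds. -/
def anitV (B A : List K → K) : List K → K := fun w =>
  ((splits3 w).map fun p =>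
    match p with
    | ([], _, _) => 0
    | (_, [], _) => 0
    | (a, b, c) => A (a ++ c) * B (b.map (fun x => x - a.getLastD 0))).sum

/-- `arit(B)·A = amit(B)·A - anit(B)·A` on v-moulds. -/
def aritV (B A : List K → K) : List K → K :=
  fun w => amitV B A w - anitV B A w

/-- the ari bracket on v-moulds. -/
def ariV (A B : List K → K) : List K → K :=
  fun w => aritV B A w + lu A B w - aritV A B w

/-- `neg(A)(u_1,...,u_r) = A(-u_1,...,-u_r)`. -/
def negM (A : List K → K) : List K → K := fun w => A (w.map fun x => -x)

/-- `push(A)(u_1,...,u_r) = A(-u_1-⋯-u_r, u_1, ..., u_{r-1})`. -/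
def pushM (A : List K → K) : List K → K := fun w =>
  match w with
  | [] => A []
  | _ :: _ => A ((-w.sum) :: w.dropLast)

/-- `mantar(A)(u_1,...,u_r) = (-1)^{r-1} A(u_r,...,u_1)`. -/
def mantarM (A : List K → K) : List K → K :=
  fun w => (-1 : K) ^ (w.length + 1) * A w.reverse

/-- argument list for swap from u-moulds to v-moulds:
`(v_1,...,v_r) ↦ (v_r, v_{r-1}-v_r, ..., v_1-v_2)`. -/
def swapUargs (w : List K) : List K :=
  List.zipWith (· - ·) w.reverse (0 :: w.reverse)

/-- argument list for swap from v-moulds to u-moulds: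
`(u_1,...,u_r) ↦ (u_1+⋯+u_r, u_1+⋯+u_{r-1}, ..., u_1)`. -/
def swapVargs (w : List K) : List K :=
  (List.range w.length).map fun i => (w.take (w.length - i)).sum

/-- swap, sending a u-mould to a v-mould. -/
def swapUV (A : List K → K) : List K → K := fun w => A (swapUargs w)

/-- swap, sending a v-mould to a u-mould. -/
def swapVU (A : List K → K) : List K → K := fun w => A (swapVargs w)

/-- A constant-valued mould: its value depends only on the depth. -/
def IsConstantMould (C : List K → K) : Prop :=
  ∀ w w' : List K, w.length = w'.length → C w = C w'

/-!
For `w = u ++ x :: v`, sum `A` over the words `x :: s` with `s` a shuffle of `u.reverse` and `v`.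
For `u = []` this is `A w`, for `v = []` it is `A w.reverse`, and moving the distinguished letter
one step to the right flips its sign: the sums for `(u ++ [y], x, v)` and `(u, y, x :: v)` are the
two halves, split by first letter, of the shuffle sum of `y :: u.reverse` with `x :: v`.
-/

section ReflectedShuffleSum

variable {α M : Type*} [AddCommGroup M]

lemma shuffles_nil_left (v : List α) : shuffles [] v = [v] := by
  cases v <;> simp [shuffles]

lemma shuffles_nil_right (u : List α) : shuffles u [] = [u] := by
  cases u <;> simp [shuffles]

def reflectedShuffleSum (A : List α → M) (u : List α) (x : α) (v : List α) : M :=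
  ((shuffles u.reverse v).map fun s => A (x :: s)).sum

lemma reflectedShuffleSum_nil_left (A : List α → M) (x : α) (v : List α) :
    reflectedShuffleSum A [] x v = A (x :: v) := by
  simp [reflectedShuffleSum, shuffles_nil_left]

lemma reflectedShuffleSum_nil_right (A : List α → M) (u : List α) (x : α) :
    reflectedShuffleSum A u x [] = A (u ++ [x]).reverse := by
  simp [reflectedShuffleSum, shuffles_nil_right]

lemma reflectedShuffleSum_append_singleton {A : List α → M} {u v : List α} {x y : α}
    (hA : ((shuffles (y :: u.reverse) (x :: v)).map A).sum = 0) :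
    reflectedShuffleSum A (u ++ [y]) x v = -reflectedShuffleSum A u y (x :: v) := by
  rw [shuffles, List.map_append, List.sum_append, List.map_map, List.map_map] at hA
  rw [eq_neg_iff_add_eq_zero, add_comm, ← hA]
  simp only [reflectedShuffleSum, List.reverse_append, List.reverse_singleton,
    List.singleton_append, Function.comp_def]

lemma reflectedShuffleSum_eq_zsmul {A : List α → M}
    (hA : ∀ u v : List α, u ≠ [] → v ≠ [] → ((shuffles u v).map A).sum = 0)
    (u : List α) (x : α) (v : List α) :
    reflectedShuffleSum A u x v = (-1 : ℤ) ^ u.length • A (u ++ x :: v) := by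
  induction u using List.reverseRecOn generalizing x v with
  | nil => simp [reflectedShuffleSum_nil_left]
  | append_singleton u y ih =>
    rw [reflectedShuffleSum_append_singleton (hA _ _ (List.cons_ne_nil _ _) (List.cons_ne_nil _ _)),
      ih]
    simp [pow_succ]

lemma apply_reverse_eq_neg_one_pow_zsmul {A : List α → M}
    (hA : ∀ u v : List α, u ≠ [] → v ≠ [] → ((shuffles u v).map A).sum = 0)
    {w : List α} (hw : w ≠ []) :
    A w.reverse = (-1 : ℤ) ^ (w.length - 1) • A w := by
  obtain ⟨u, x, rfl⟩ := List.eq_nil_or_concat w |>.resolve_left hw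
  rw [List.concat_eq_append, ← reflectedShuffleSum_nil_right A, reflectedShuffleSum_eq_zsmul hA]
  simp

end ReflectedShuffleSum

/-- an alternal mould is mantar-invariant:
`A(u_1,...,u_r) = (-1)^{r-1} A(u_r,...,u_1)` for `r ≥ 1`. -/
theorem alternal_mantar_invariant (A : List K → K) (hA : Alternal A) :
    ∀ w : List K, w ≠ [] → A w = (-1 : K) ^ (w.length - 1) * A w.reverse := by
  intro w hw
  have h := apply_reverse_eq_neg_one_pow_zsmul hA (List.reverse_ne_nil_iff.mpr hw)
  rw [List.reverse_reverse, List.length_reverse, zsmul_eq_mul] at h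
  simpa using h
end

section
/- For all moulds A, B in ARI, swap(ari(swap(A), swap(B))) = axit(B, -push(B))·A - axit(A, -push(A))·B + lu(A,B), where ari on the left is the Lie bracket on v-moulds and axit(B,C)·A = amit(B)·A + anit(C)·A on u-moulds. -/
/-!
Since `swapVargs w` is the reversed list of prefix sums of `w`, the decompositions of
`swapVargs w` into three blocks correspond to the decompositions `w = abc` (with the outer blocks
exchanged), and swapping back turns each block of prefix sums into the differences of its letters.
Under this correspondence, and because `B [] = 0`, both `amit(swap B)·swap A + mu(swap A, swap B)`
on v-moulds and `amit(B)·A + mu(A, B)` on u-moulds become `Σ_{w=abc} A(a⌈c) B(b)`. The `anit`-part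
on v-moulds becomes `-anit(-push B)·A` after moving the middle block of each decomposition one
letter to the left. The theorem is the difference of these identities for `(A, B)` and `(B, A)`.
-/

open List

variable {K : Type*} [Field K] [CharZero K]

/-- `axit(B,C)·A = amit(B)·A + anit(C)·A` on u-moulds. -/
def axitU (B C A : List K → K) : List K → K :=
  fun w => amitU B A w + anitU C A w

section Splits

variable {α : Type*}

theorem mem_splits2 {w : List α} {p : List α × List α} : p ∈ splits2 w ↔ p.1 ++ p.2 = w := by
  constructor
  · simp only [splits2, List.mem_map, List.mem_range]
    rintro ⟨k, -, rfl⟩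
    exact List.take_append_drop k w
  · rintro rfl
    simp only [splits2, List.mem_map, List.mem_range]
    exact ⟨p.1.length, by simp, by simp⟩

theorem mem_splits3 {w : List α} {p : List α × List α × List α} :
    p ∈ splits3 w ↔ p.1 ++ p.2.1 ++ p.2.2 = w := by
  simp only [splits3, List.mem_flatMap, List.mem_map, mem_splits2]
  constructor
  · rintro ⟨q, rfl, r, hr, rfl⟩
    simp [← hr]
  · intro h
    exact ⟨(p.1, p.2.1 ++ p.2.2), by simpa using h, p.2, rfl, rfl⟩

theorem nodup_splits2 (w : List α) : (splits2 w).Nodup := by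
  refine (List.nodup_range).map_on fun k hk l hl hkl => ?_
  have := congrArg (fun p => p.1.length) hkl
  simp only [List.length_take, List.mem_range] at this hk hl
  omega

theorem nodup_splits3 (w : List α) : (splits3 w).Nodup := by
  refine List.nodup_flatMap.2 ⟨fun q _ => (nodup_splits2 q.2).map fun r s h => ?_, ?_⟩
  · simp only [Prod.mk.injEq] at h
    exact Prod.ext h.2.1 h.2.2
  · refine (nodup_splits2 w).imp_of_mem fun {q q'} hq hq' hne => ?_
    refine List.disjoint_left.2 fun {p} hp hp' => hne ?_
    simp only [List.mem_map] at hp hp'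
    obtain ⟨r, -, rfl⟩ := hp
    obtain ⟨r', -, hr'⟩ := hp'
    have h1 : q'.1 = q.1 := (Prod.mk.inj hr').1
    have h2 : q.1 ++ q.2 = q'.1 ++ q'.2 := (mem_splits2.1 hq).trans (mem_splits2.1 hq').symm
    rw [h1, List.append_cancel_left_eq] at h2
    exact Prod.ext h1.symm h2

variable {M : Type*} [AddCommMonoid M]

theorem sum_splits2_eq_sum_range (w : List α) (f : List α × List α → M) :
    ((splits2 w).map f).sum = ∑ k ∈ Finset.range (w.length + 1), f (w.take k, w.drop k) := by
  rw [splits2, List.map_map]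
  rfl

theorem sum_splits3_reverse (w : List α) (f : List α × List α × List α → M) :
    ((splits3 w.reverse).map f).sum =
      ((splits3 w).map fun p => f (p.2.2.reverse, p.2.1.reverse, p.1.reverse)).sum := by
  set rev3 : List α × List α × List α → List α × List α × List α :=
    fun p => (p.2.2.reverse, p.2.1.reverse, p.1.reverse)
  have hrev3 : Function.Involutive rev3 := fun p => by simp [rev3]
  have hperm : (splits3 w.reverse).Perm ((splits3 w).map rev3) := by
    refine (List.perm_ext_iff_of_nodup (nodup_splits3 _)
      ((nodup_splits3 w).map hrev3.injective)).2 fun p => ?_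
    rw [List.mem_map_of_involutive hrev3, mem_splits3, mem_splits3, ← List.reverse_inj]
    simp [rev3]
  rw [(hperm.map f).sum_eq, List.map_map]
  rfl

theorem sum_splits3_ite_nil_eq_sum_splits2 (w : List α) (f : List α × List α → M) :
    ((splits3 w).map fun p => if p.2.2 = [] then f (p.1, p.2.1) else 0).sum =
      ((splits2 w).map f).sum := by
  classical
  rw [← List.sum_toFinset _ (nodup_splits3 w), ← List.sum_toFinset _ (nodup_splits2 w),
    ← Finset.sum_filter]
  refine Finset.sum_nbij' (fun p => (p.1, p.2.1)) (fun q => (q.1, q.2, [])) ?_ ?_ ?_ ?_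
    fun _ _ => rfl
  · rintro ⟨a, b, c⟩ h
    simp only [Finset.mem_filter, List.mem_toFinset, mem_splits3] at h
    simp [mem_splits2, ← h.1, h.2]
  · rintro ⟨a, b⟩ h
    simpa [mem_splits2, mem_splits3] using h
  · rintro ⟨a, b, c⟩ h
    simp only [Finset.mem_filter] at h
    simp [h.2]
  · intro q _
    rfl

theorem sum_splits3_shift (w : List α) (f : List α × List α × List α → M) :
    ((splits3 w).map fun p => if p.1 ≠ [] ∧ p.2.1 ≠ [] then f p else 0).sum =
      ((splits3 w).map fun p => if p.2.1 ≠ [] ∧ p.2.2 ≠ [] then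
        f (p.1 ++ p.2.1.take 1, p.2.1.drop 1 ++ p.2.2.take 1, p.2.2.drop 1) else 0).sum := by
  classical
  rw [← List.sum_toFinset _ (nodup_splits3 w), ← List.sum_toFinset _ (nodup_splits3 w),
    ← Finset.sum_filter, ← Finset.sum_filter]
  have of_mem_left : ∀ p ∈ (splits3 w).toFinset.filter fun p => p.1 ≠ [] ∧ p.2.1 ≠ [],
      ∃ a x b y c, p = (a ++ [x], b ++ [y], c) ∧ a ++ [x] ++ (b ++ [y]) ++ c = w := by
    rintro ⟨a, b, c⟩ h
    simp only [Finset.mem_filter, List.mem_toFinset, mem_splits3] at h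
    obtain ⟨a, x, rfl⟩ := List.eq_nil_or_concat' a |>.resolve_left h.2.1
    obtain ⟨b, y, rfl⟩ := List.eq_nil_or_concat' b |>.resolve_left h.2.2
    exact ⟨a, x, b, y, c, rfl, h.1⟩
  have of_mem_right : ∀ p ∈ (splits3 w).toFinset.filter fun p => p.2.1 ≠ [] ∧ p.2.2 ≠ [],
      ∃ a x b y c, p = (a, x :: b, y :: c) ∧ a ++ x :: b ++ y :: c = w := by
    rintro ⟨a, b, c⟩ h
    simp only [Finset.mem_filter, List.mem_toFinset, mem_splits3] at h
    obtain ⟨x, b, rfl⟩ := List.exists_cons_of_ne_nil h.2.1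
    obtain ⟨y, c, rfl⟩ := List.exists_cons_of_ne_nil h.2.2
    exact ⟨a, x, b, y, c, rfl, h.1⟩
  refine Finset.sum_nbij'
    (fun p => (p.1.dropLast, p.1.drop (p.1.length - 1) ++ p.2.1.dropLast,
      p.2.1.drop (p.2.1.length - 1) ++ p.2.2))
    (fun p => (p.1 ++ p.2.1.take 1, p.2.1.drop 1 ++ p.2.2.take 1, p.2.2.drop 1))
    ?_ ?_ ?_ ?_ ?_ <;> intro p hp
  · obtain ⟨a, x, b, y, c, rfl, rfl⟩ := of_mem_left p hp
    simp [mem_splits3]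
  · obtain ⟨a, x, b, y, c, rfl, rfl⟩ := of_mem_right p hp
    simp [mem_splits3]
  · obtain ⟨a, x, b, y, c, rfl, -⟩ := of_mem_left p hp
    simp
  · obtain ⟨a, x, b, y, c, rfl, -⟩ := of_mem_right p hp
    simp
  · obtain ⟨a, x, b, y, c, rfl, -⟩ := of_mem_left p hp
    simp

end Splits

section PrefixSums

variable {G : Type*}

def prefixSums [AddMonoid G] : G → List G → List G
  | _, [] => []
  | s, x :: l => (s + x) :: prefixSums (s + x) l

def differences [Sub G] (s : G) (l : List G) : List G := List.zipWith (· - ·) l (s :: l)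

section AddMonoid

variable [AddMonoid G]

@[simp]
theorem prefixSums_nil (s : G) : prefixSums s [] = [] := rfl

@[simp]
theorem prefixSums_cons (s x : G) (l : List G) :
    prefixSums s (x :: l) = (s + x) :: prefixSums (s + x) l := rfl

@[simp]
theorem length_prefixSums (s : G) (l : List G) : (prefixSums s l).length = l.length := by
  induction l generalizing s <;> simp [*]

@[simp]
theorem prefixSums_eq_nil_iff {s : G} {l : List G} : prefixSums s l = [] ↔ l = [] := by
  cases l <;> simp

theorem prefixSums_append (s : G) (l m : List G) :
    prefixSums s (l ++ m) = prefixSums s l ++ prefixSums (s + l.sum) m := by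
  induction l generalizing s <;> simp [*, add_assoc]

theorem getElem_prefixSums (s : G) (l : List G) (i : ℕ) (h : i < (prefixSums s l).length) :
    (prefixSums s l)[i] = s + (l.take (i + 1)).sum := by
  induction l generalizing s i with
  | nil => simp at h
  | cons x l ih =>
    cases i with
    | zero => simp
    | succ i => simp [ih, add_assoc]

theorem getLastD_prefixSums (s : G) (l : List G) : (prefixSums s l).getLastD s = s + l.sum := by
  induction l generalizing s with
  | nil => simp
  | cons x l ih => rw [prefixSums_cons, List.getLastD_cons, ih, List.sum_cons, add_assoc]

theorem splits2_prefixSums (s : G) (w : List G) :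
    splits2 (prefixSums s w) =
      (splits2 w).map fun p => (prefixSums s p.1, prefixSums (s + p.1.sum) p.2) := by
  simp only [splits2, length_prefixSums, List.map_map, Function.comp_def]
  refine List.map_congr_left fun k hk => ?_
  have hk : k ≤ w.length := by simpa [Nat.lt_succ_iff] using hk
  have hlen : (prefixSums s (w.take k)).length = k := by simp [hk]
  conv_lhs => rw [← List.take_append_drop k w, prefixSums_append]
  rw [List.take_left' hlen, List.drop_left' hlen]

theorem splits3_prefixSums (s : G) (w : List G) :
    splits3 (prefixSums s w) = (splits3 w).map fun p =>
      (prefixSums s p.1, prefixSums (s + p.1.sum) p.2.1,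
        prefixSums (s + p.1.sum + p.2.1.sum) p.2.2) := by
  simp only [splits3, splits2_prefixSums, List.flatMap_map, List.map_flatMap, List.map_map]
  rfl

end AddMonoid

theorem prefixSums_map_sub [AddCommGroup G] (s t : G) (l : List G) :
    (prefixSums s l).map (· - t) = prefixSums (s - t) l := by
  induction l generalizing s <;> simp [*, sub_add_eq_add_sub]

@[simp]
theorem differences_cons [Sub G] (s x : G) (l : List G) :
    differences s (x :: l) = (x - s) :: differences x l := rfl

theorem differences_prefixSums_self [AddCommGroup G] (s : G) (l : List G) :
    differences s (prefixSums s l) = l := by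
  induction l generalizing s with
  | nil => rfl
  | cons x l ih => rw [prefixSums_cons, differences_cons, ih, add_sub_cancel_left]

end PrefixSums

section Moulds

variable {K : Type*} [Field K]

@[simp]
theorem addFirst_zero (l : List K) : addFirst 0 l = l := by
  cases l <;> simp [addFirst]

theorem addLast_concat (s : K) (l : List K) (x : K) : addLast s (l ++ [x]) = l ++ [x + s] := by
  induction l with
  | nil => rfl
  | cons y l ih =>
    cases l with
    | nil => rfl
    | cons z l => exact congrArg (y :: ·) ih

theorem differences_prefixSums (s t : K) (l : List K) :
    differences t (prefixSums s l) = addFirst (s - t) l := by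
  cases l with
  | nil => rfl
  | cons x l =>
    rw [prefixSums_cons, differences_cons, differences_prefixSums_self, addFirst]
    congr 1
    ring

theorem differences_prefixSums_append (s t : K) (l m : List K) :
    differences t (prefixSums t l ++ prefixSums s m) = l ++ addFirst (s - (t + l.sum)) m := by
  induction l generalizing t with
  | nil => simp [differences_prefixSums]
  | cons x l ih => simp [differences_cons, ih, add_assoc]

theorem pushM_concat (B : List K → K) (l : List K) (y : K) :
    pushM B (l ++ [y]) = B (-(l.sum + y) :: l) := by
  cases l with
  | nil => simp [pushM]
  | cons x l =>
    simp only [pushM, List.cons_append]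
    rw [← List.cons_append, List.dropLast_concat, List.sum_append, List.sum_singleton]

theorem swapVargs_eq_reverse_prefixSums (w : List K) : swapVargs w = (prefixSums 0 w).reverse := by
  refine List.ext_getElem (by simp [swapVargs]) fun i h₁ h₂ => ?_
  simp only [List.getElem_reverse, getElem_prefixSums, swapVargs, List.getElem_map,
    List.getElem_range, length_prefixSums, zero_add]
  congr 2
  simp [swapVargs] at h₁
  omega

theorem swapUV_reverse (A : List K → K) (l : List K) :
    swapUV A l.reverse = A (differences 0 l) := by
  simp [swapUV, swapUargs, differences]

theorem sum_splits3_swapVargs {M : Type*} [AddCommMonoid M] (w : List K)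
    (f : List K × List K × List K → M) :
    ((splits3 (swapVargs w)).map f).sum = ((splits3 w).map fun p =>
      f ((prefixSums (p.1.sum + p.2.1.sum) p.2.2).reverse, (prefixSums p.1.sum p.2.1).reverse,
        (prefixSums 0 p.1).reverse)).sum := by
  simp [swapVargs_eq_reverse_prefixSums, sum_splits3_reverse, splits3_prefixSums, Function.comp_def]

theorem mu_eq_sum_splits3 (A B : List K → K) (w : List K) :
    mu A B w = ((splits3 w).map fun p => if p.2.2 = [] then A p.1 * B p.2.1 else 0).sum := by
  rw [sum_splits3_ite_nil_eq_sum_splits2 w fun p => A p.1 * B p.2, sum_splits2_eq_sum_range]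
  rfl

theorem amitU_eq_sum (A B : List K → K) (w : List K) :
    amitU B A w = ((splits3 w).map fun p => if p.2.1 ≠ [] ∧ p.2.2 ≠ [] then
      A (p.1 ++ addFirst p.2.1.sum p.2.2) * B p.2.1 else 0).sum := by
  refine congrArg List.sum (List.map_congr_left ?_)
  rintro ⟨a, _ | ⟨x, b⟩, _ | ⟨y, c⟩⟩ - <;> simp

theorem anitU_eq_sum (A C : List K → K) (w : List K) :
    anitU C A w = ((splits3 w).map fun p => if p.1 ≠ [] ∧ p.2.1 ≠ [] then
      A (addLast p.2.1.sum p.1 ++ p.2.2) * C p.2.1 else 0).sum := by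
  refine congrArg List.sum (List.map_congr_left ?_)
  rintro ⟨_ | ⟨x, a⟩, _ | ⟨y, b⟩, c⟩ - <;> simp

theorem amitV_eq_sum (A B : List K → K) (w : List K) :
    amitV B A w = ((splits3 w).map fun p => if p.2.1 ≠ [] ∧ p.2.2 ≠ [] then
      A (p.1 ++ p.2.2) * B (p.2.1.map (· - p.2.2.headD 0)) else 0).sum := by
  refine congrArg List.sum (List.map_congr_left ?_)
  rintro ⟨a, _ | ⟨x, b⟩, _ | ⟨y, c⟩⟩ - <;> simp

theorem anitV_eq_sum (A B : List K → K) (w : List K) :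
    anitV B A w = ((splits3 w).map fun p => if p.1 ≠ [] ∧ p.2.1 ≠ [] then
      A (p.1 ++ p.2.2) * B (p.2.1.map (· - p.1.getLastD 0)) else 0).sum := by
  refine congrArg List.sum (List.map_congr_left ?_)
  rintro ⟨_ | ⟨x, a⟩, _ | ⟨y, b⟩, c⟩ - <;> simp

theorem amitU_add_mu_eq_sum (A B : List K → K) (hB : B [] = 0) (w : List K) :
    amitU B A w + mu A B w =
      ((splits3 w).map fun p => A (p.1 ++ addFirst p.2.1.sum p.2.2) * B p.2.1).sum := by
  rw [amitU_eq_sum, mu_eq_sum_splits3, ← List.sum_map_add]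
  refine congrArg List.sum (List.map_congr_left ?_)
  rintro ⟨a, b, c⟩ -
  rcases eq_or_ne b [] with rfl | hb
  · simp [hB]
  · rcases eq_or_ne c [] with rfl | hc <;> simp [addFirst, *]

theorem amitV_add_mu_swap_eq_sum (A B : List K → K) (hB : B [] = 0) (w : List K) :
    amitV (swapUV B) (swapUV A) (swapVargs w) + mu (swapUV A) (swapUV B) (swapVargs w) =
      ((splits3 w).map fun p => A (p.1 ++ addFirst p.2.1.sum p.2.2) * B p.2.1).sum := by
  rw [amitV_eq_sum, mu_eq_sum_splits3, sum_splits3_swapVargs, sum_splits3_swapVargs,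
    ← List.sum_map_add]
  refine congrArg List.sum (List.map_congr_left ?_)
  rintro ⟨a, b, c⟩ -
  simp only [ne_eq, List.reverse_eq_nil_iff, prefixSums_eq_nil_iff, ← List.reverse_append,
    List.map_reverse, swapUV_reverse, List.headD_eq_head?_getD, List.head?_reverse,
    ← List.getLastD_eq_getLast?, getLastD_prefixSums, prefixSums_map_sub,
    differences_prefixSums_append, differences_prefixSums]
  rcases eq_or_ne b [] with rfl | hb
  · simp [hB, addFirst]
  · rcases eq_or_ne a [] with rfl | ha <;> simp [*]

theorem anitV_swap_eq_neg_anitU_push (A B : List K → K) (w : List K) :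
    anitV (swapUV B) (swapUV A) (swapVargs w) = -anitU (fun w' => -pushM B w') A w := by
  rw [anitU_eq_sum, sum_splits3_shift, anitV_eq_sum, sum_splits3_swapVargs]
  refine eq_neg_of_add_eq_zero_left ?_
  rw [← List.sum_map_add]
  refine List.sum_eq_zero (List.forall_mem_map.2 fun ⟨a, b, c⟩ _ => ?_)
  simp only [ne_eq, List.reverse_eq_nil_iff, prefixSums_eq_nil_iff, ← List.reverse_append,
    List.map_reverse, swapUV_reverse, List.getLastD_eq_getLast?, List.getLast?_reverse,
    prefixSums_map_sub, differences_prefixSums_append, differences_prefixSums]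
  rcases eq_or_ne b [] with rfl | hb
  · simp
  rcases eq_or_ne c [] with rfl | hc
  · simp
  obtain ⟨x, b, rfl⟩ := List.exists_cons_of_ne_nil hb
  obtain ⟨y, c, rfl⟩ := List.exists_cons_of_ne_nil hc
  simp only [reduceCtorEq, not_false_eq_true, and_self, ↓reduceIte, addFirst,
    List.sum_cons, List.sum_append, List.sum_nil, prefixSums_cons, List.head?_cons,
    Option.getD_some, List.drop_succ_cons, List.drop_zero, List.take_succ_cons, List.take_zero,
    addLast_concat, List.append_assoc, List.cons_append, List.nil_append, pushM_concat]
  ring_nf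

end Moulds

/-- for all moulds `A, B` in ARI,
`swap(ari(swap A, swap B)) = axit(B,-push B)·A - axit(A,-push A)·B + lu(A,B)`. -/
theorem swap_ari_swap_eq_axit (A B : List K → K)
    (hA0 : A [] = 0) (hB0 : B [] = 0) :
    swapVU (ariV (swapUV A) (swapUV B)) =
      fun w => axitU B (fun w' => -(pushM B w')) A w
        - axitU A (fun w' => -(pushM A w')) B w + lu A B w := by
  funext w
  have amit_AB := (amitV_add_mu_swap_eq_sum A B hB0 w).trans (amitU_add_mu_eq_sum A B hB0 w).symm
  have amit_BA := (amitV_add_mu_swap_eq_sum B A hA0 w).trans (amitU_add_mu_eq_sum B A hA0 w).symm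
  have anit_AB := anitV_swap_eq_neg_anitU_push A B w
  have anit_BA := anitV_swap_eq_neg_anitU_push B A w
  simp only [swapVU, ariV, aritV, lu, axitU]
  linear_combination amit_AB - amit_BA - anit_AB + anit_BA
end
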